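/- arXiv:2601.08062 — 2 statements merged into one kernel-verified Lean document; each statement's English description precedes it below -/
import Mathlib

section
/- Let ẽ : ℕ × ℕ → ℚ be defined by ẽ(1,0) = 1, ẽ(1,g) = 0 for g ≥ 1, ẽ(0,g) = 0 for all g, and for n ≥ 2 and all g ≥ 0: ẽ(n,g) = (1/2)·[ Σ_{m=1}^{n−1} binom(n,m)·Σ_{ℓ=0}^{g} ẽ(m,ℓ)·ẽ(n−m,g−ℓ) + Σ_{k=3}^{n} (k−2)·Σ over compositions (c_1,…,c_k) of n into k parts and compositions (d_1,…,d_k) of g−1+k into k parts of (n!/(c_1!·c_2!⋯c_k!))·Π_{i=1}^{k} ẽ(c_i,d_i−1) ] + Σ_{k=2}^{n} Σ over compositions (c_1,…,c_k) of n into k parts and compositions (d_1,…,d_k) of g−1+k into k parts of (n!/(c_1!·c_2!⋯c_k!))·Π_{i=1}^{k} ẽ(c_i,d_i−1). (This recursion counts leaf-labeled general galled trees with n leaves and g galls.) Then for every n ≥ 1, ẽ(n, n−1) = C_{n−1}·n!, where C_{n−1} is the (n−1)-st Catalan number. -/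
open Finset

/-!
Each term of the recursion for `ẽ(n, g)` is, up to a weight, a product of `k ≥ 2` values
`ẽ(mᵢ, ℓᵢ)` with `mᵢ < n`, `Σ mᵢ = n` and `Σ ℓᵢ ≥ g + 1 - k`. If `g ≥ n` some factor has
`ℓᵢ ≥ mᵢ`, so by strong induction `ẽ(n, g) = 0` whenever `g ≥ n`. On the line `g = n - 1` the
same count kills the pairing sum and the composition sums with `k ≥ 3`, and for `k = 2` only the
diagonal `d = c` survives. Hence `ẽ(n, n-1) = Σ_{c₁+c₂=n} n!/(c₁! c₂!) ẽ(c₁, c₁-1) ẽ(c₂, c₂-1)`,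
which after dividing by `n!` is Segner's recursion for the Catalan numbers.
-/

/-- The compositions of `a` into `b` (positive) parts, as functions `Fin b → ℕ`.
Every part of a composition of `a` lies in `[1, a]`, so filtering inside
`Finset.Icc 1 a` captures all compositions. -/
def compositions (a b : ℕ) : Finset (Fin b → ℕ) :=
  (Fintype.piFinset fun _ => Finset.Icc 1 a).filter fun c => ∑ i, c i = a

lemma mem_compositions {a b : ℕ} {c : Fin b → ℕ} :
    c ∈ compositions a b ↔ (∀ i, 1 ≤ c i) ∧ ∑ i, c i = a := by
  simp only [compositions, mem_filter, Fintype.mem_piFinset, mem_Icc]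
  constructor
  · rintro ⟨hc, hsum⟩
    exact ⟨fun i => (hc i).1, hsum⟩
  · rintro ⟨hpos, rfl⟩
    exact ⟨fun i => ⟨hpos i, single_le_sum (fun j _ => Nat.zero_le (c j)) (mem_univ i)⟩, rfl⟩

lemma lt_of_mem_compositions {a b : ℕ} {c : Fin b → ℕ} (hc : c ∈ compositions a b)
    (hb : 2 ≤ b) (i : Fin b) : c i < a := by
  obtain ⟨hpos, rfl⟩ := mem_compositions.1 hc
  have : Nontrivial (Fin b) := Fin.nontrivial_iff_two_le.2 hb
  obtain ⟨j, hj⟩ := exists_ne i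
  exact single_lt_sum hj (mem_univ i) (mem_univ j) (hpos j) fun _ _ _ => Nat.zero_le _

lemma sum_compositions_two {M : Type*} [AddCommMonoid M] (n : ℕ) (f : ℕ → ℕ → M) :
    ∑ c ∈ compositions (n + 2) 2, f (c 0) (c 1) =
      ∑ p ∈ antidiagonal n, f (p.1 + 1) (p.2 + 1) := by
  refine sum_nbij' (fun c => (c 0 - 1, c 1 - 1)) (fun p => ![p.1 + 1, p.2 + 1])
    ?_ ?_ ?_ ?_ ?_
  · intro c hc
    obtain ⟨hpos, hsum⟩ := mem_compositions.1 hc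
    rw [Fin.sum_univ_two] at hsum
    have := hpos 0
    have := hpos 1
    simp only [HasAntidiagonal.mem_antidiagonal]
    omega
  · intro p hp
    rw [HasAntidiagonal.mem_antidiagonal] at hp
    refine mem_compositions.2 ⟨fun i => ?_, ?_⟩
    · fin_cases i <;> simp
    · simp only [Fin.sum_univ_two, Matrix.cons_val_zero, Matrix.cons_val_one]
      omega
  · intro c hc
    obtain ⟨hpos, -⟩ := mem_compositions.1 hc
    funext i
    fin_cases i <;> exact Nat.sub_add_cancel (hpos _)
  · intro p _
    simp
  · intro c hc
    obtain ⟨hpos, -⟩ := mem_compositions.1 hc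
    simp only [Nat.sub_add_cancel (hpos 0), Nat.sub_add_cancel (hpos 1)]

lemma multinomial_mul_prod_factorial {R : Type*} [CommSemiring R] {n k : ℕ} {c : Fin k → ℕ}
    (hc : c ∈ compositions n k) (a : Fin k → R) :
    (Nat.multinomial univ c : R) * ∏ i, a i * (c i).factorial = (∏ i, a i) * n.factorial := by
  have hspec := Nat.multinomial_spec univ c
  rw [(mem_compositions.1 hc).2] at hspec
  rw [prod_mul_distrib, ← hspec]
  push_cast
  ring

section GalledTrees

variable {e : ℕ → ℕ → ℚ}

def pairSum (e : ℕ → ℕ → ℚ) (n g : ℕ) : ℚ :=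
  ∑ m ∈ Ico 1 n, (n.choose m : ℚ) * ∑ ℓ ∈ range (g + 1), e m ℓ * e (n - m) (g - ℓ)

def compositionSum (e : ℕ → ℕ → ℚ) (n g k : ℕ) : ℚ :=
  ∑ c ∈ compositions n k, ∑ d ∈ compositions (g + k - 1) k,
    (Nat.multinomial univ c : ℚ) * ∏ i : Fin k, e (c i) (d i - 1)

def GalledTreeRecursion (e : ℕ → ℕ → ℚ) : Prop :=
  ∀ n g, 2 ≤ n → e n g =
    (1 / 2) * (pairSum e n g + ∑ k ∈ Icc 3 n, ((k : ℚ) - 2) * compositionSum e n g k)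
      + ∑ k ∈ Icc 2 n, compositionSum e n g k

lemma pairSum_eq_zero {n g : ℕ} (hvan : ∀ m < n, ∀ ℓ, m ≤ ℓ → e m ℓ = 0) (hg : n ≤ g + 1) :
    pairSum e n g = 0 := by
  refine sum_eq_zero fun m hm => mul_eq_zero_of_right _ (sum_eq_zero fun ℓ hℓ => ?_)
  rw [mem_Ico] at hm
  rw [mem_range] at hℓ
  rcases le_or_gt m ℓ with h | h
  · rw [hvan m hm.2 ℓ h, zero_mul]
  · rw [hvan (n - m) (by omega) (g - ℓ) (by omega), mul_zero]

lemma prod_eq_zero_of_sum_lt_sum {ι : Type*} [Fintype ι] {n : ℕ} {c d : ι → ℕ}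
    (hvan : ∀ m < n, ∀ ℓ, m ≤ ℓ → e m ℓ = 0) (hc : ∀ i, c i < n)
    (hlt : ∑ i, c i < ∑ i, d i) : ∏ i, e (c i) (d i - 1) = 0 := by
  obtain ⟨i, -, hi⟩ := exists_lt_of_sum_lt hlt
  exact prod_eq_zero (mem_univ i) (hvan _ (hc i) _ (by omega))

lemma compositionSum_eq_zero {n g k : ℕ} (hvan : ∀ m < n, ∀ ℓ, m ≤ ℓ → e m ℓ = 0)
    (hk : 2 ≤ k) (hgk : n + 1 < g + k) : compositionSum e n g k = 0 := by
  refine sum_eq_zero fun c hc => sum_eq_zero fun d hd => mul_eq_zero_of_right _ ?_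
  refine prod_eq_zero_of_sum_lt_sum hvan (lt_of_mem_compositions hc hk) ?_
  rw [(mem_compositions.1 hc).2, (mem_compositions.1 hd).2]
  omega

theorem GalledTreeRecursion.eq_zero_of_le (hrec : GalledTreeRecursion e)
    (h0 : ∀ g, e 0 g = 0) (h1 : ∀ g, 1 ≤ g → e 1 g = 0) (n g : ℕ) (hng : n ≤ g) : e n g = 0 := by
  induction n using Nat.strong_induction_on generalizing g with
  | _ n ih =>
    match n, ih with
    | 0, _ => exact h0 g
    | 1, _ => exact h1 g hng
    | n + 2, ih =>
      have hvan : ∀ m < n + 2, ∀ ℓ, m ≤ ℓ → e m ℓ = 0 := ih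
      have hsum : ∀ k ∈ Icc 2 (n + 2), compositionSum e (n + 2) g k = 0 := fun k hk =>
        compositionSum_eq_zero hvan (mem_Icc.1 hk).1 (by have := (mem_Icc.1 hk).1; omega)
      rw [hrec _ g (by omega), pairSum_eq_zero hvan (by omega), sum_eq_zero hsum,
        sum_eq_zero fun k hk => by
          rw [hsum k (Icc_subset_Icc_left (by norm_num) hk), mul_zero]]
      ring

lemma sum_prod_compositions_eq_diag (hvan : ∀ m ℓ, m ≤ ℓ → e m ℓ = 0) {n k : ℕ}
    {c : Fin k → ℕ} (hc : c ∈ compositions n k) :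
    ∑ d ∈ compositions n k, ∏ i, e (c i) (d i - 1) = ∏ i, e (c i) (c i - 1) := by
  refine sum_eq_single_of_mem c hc fun d hd hdc => ?_
  obtain ⟨i, hi⟩ : ∃ i, c i < d i := by
    by_contra! hle
    refine hdc (funext fun i => ?_)
    have hsum : ∑ i, d i = ∑ i, c i := by
      rw [(mem_compositions.1 hd).2, (mem_compositions.1 hc).2]
    exact (sum_eq_sum_iff_of_le fun i _ => hle i).1 hsum i (mem_univ i)
  exact prod_eq_zero (mem_univ i) (hvan _ _ (by omega))

lemma GalledTreeRecursion.eq_sum_compositions_two (hrec : GalledTreeRecursion e)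
    (hvan : ∀ m ℓ, m ≤ ℓ → e m ℓ = 0) {n : ℕ} (hn : 2 ≤ n) :
    e n (n - 1) =
      ∑ c ∈ compositions n 2, (Nat.multinomial univ c : ℚ) * ∏ i, e (c i) (c i - 1) := by
  have hvan' : ∀ m < n, ∀ ℓ, m ≤ ℓ → e m ℓ = 0 := fun m _ => hvan m
  have hsum : ∀ k ∈ Icc 3 n, compositionSum e n (n - 1) k = 0 := fun k hk =>
    compositionSum_eq_zero hvan' (by have := (mem_Icc.1 hk).1; omega)
      (by have := (mem_Icc.1 hk).1; omega)
  rw [hrec n _ hn, pairSum_eq_zero hvan' (by omega),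
    sum_eq_zero fun k hk => by rw [hsum k hk, mul_zero],
    sum_eq_single_of_mem 2 (by rw [mem_Icc]; omega) fun k hk hk2 =>
      hsum k (by rw [mem_Icc] at hk ⊢; omega)]
  have hdeg : n - 1 + 2 - 1 = n := by omega
  simp only [compositionSum, hdeg, add_zero, mul_zero, zero_add]
  exact sum_congr rfl fun c hc => by rw [← mul_sum, sum_prod_compositions_eq_diag hvan hc]

end GalledTrees

/-- If `ẽ : ℕ × ℕ → ℚ` satisfies `ẽ(1,0)=1`, `ẽ(1,g)=0` for `g ≥ 1`, `ẽ(0,g)=0`, and for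
`n ≥ 2` the recursion counting leaf-labeled general galled trees with `n` leaves and `g` galls
(where `Nat.multinomial univ c = n!/(c₁!⋯c_k!)` for a composition `c` of `n`), then
`ẽ(n, n−1) = C_{n−1}·n!` for all `n ≥ 1`. -/
theorem stmt10 (e : ℕ → ℕ → ℚ)
    (h10 : e 1 0 = 1)
    (h1g : ∀ g, 1 ≤ g → e 1 g = 0)
    (h0g : ∀ g, e 0 g = 0)
    (hrec : ∀ n g, 2 ≤ n →
      e n g = (1 / 2) *
        ((∑ m ∈ Finset.Ico 1 n, (n.choose m : ℚ) *
            ∑ ℓ ∈ Finset.range (g + 1), e m ℓ * e (n - m) (g - ℓ))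
         + (∑ k ∈ Finset.Icc 3 n, ((k : ℚ) - 2) *
             ∑ c ∈ compositions n k, ∑ d ∈ compositions (g + k - 1) k,
               (Nat.multinomial Finset.univ c : ℚ) * ∏ i : Fin k, e (c i) (d i - 1)))
      + (∑ k ∈ Finset.Icc 2 n, ∑ c ∈ compositions n k, ∑ d ∈ compositions (g + k - 1) k,
          (Nat.multinomial Finset.univ c : ℚ) * ∏ i : Fin k, e (c i) (d i - 1))) :
    ∀ n, 1 ≤ n → e n (n - 1) = (catalan (n - 1) : ℚ) * Nat.factorial n := by
  have hrec' : GalledTreeRecursion e := hrec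
  have hvan := hrec'.eq_zero_of_le h0g h1g
  intro n hn
  induction n using Nat.strong_induction_on with
  | _ n ih =>
    match n, hn, ih with
    | 1, _, _ => simpa using h10
    | N + 2, _, ih =>
      rw [hrec'.eq_sum_compositions_two hvan (by omega)]
      calc _ = ∑ c ∈ compositions (N + 2) 2,
              (catalan (c 0 - 1) * catalan (c 1 - 1) : ℚ) * (N + 2).factorial :=
            sum_congr rfl fun c hc => by
              rw [prod_congr rfl fun i _ =>
                  ih (c i) (lt_of_mem_compositions hc le_rfl i) ((mem_compositions.1 hc).1 i),
                multinomial_mul_prod_factorial hc, Fin.prod_univ_two]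
        _ = (∑ p ∈ antidiagonal N, (catalan p.1 * catalan p.2 : ℚ)) * (N + 2).factorial := by
            rw [sum_compositions_two N fun a b => (catalan (a - 1) * catalan (b - 1) : ℚ) * _,
              sum_mul]
            simp only [Nat.add_sub_cancel]
        _ = _ := by rw [show N + 2 - 1 = N + 1 from rfl, catalan_succ']; push_cast; rfl
end

section
/- Let f : ℝ → ℝ be given by f(t) = (1 − √(1−2t))^3 / (2·(1−2t)^{3/2}) + (1 − √(1−2t))^2 / (1−2t) for t < 1/2. Then the sequence n ↦ f^{(n)}(0) of iterated derivatives of f at 0 is asymptotically equivalent, as n → ∞, to the sequence n ↦ (1/√π)·n^{1/2}·2^n·n!. (The quantity f^{(n)}(0) equals the number ẽ_{n,1} of leaf-labeled general galled trees with n leaves and exactly one gall.) -/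
/-!
With `x = 1 - 2t` and `√x = 1 - 𝔘(t)`, the generating function is the combination
`(x^(-3/2) - x^(-1) - x^(-1/2) + 1) / 2` of powers of `x`, so its `n`-th derivative at `0` is
`2ⁿ ((3/2)⁽ⁿ⁾ - n! - (1/2)⁽ⁿ⁾) / 2` in rising factorials. Since `(3/2)⁽ⁿ⁾ = 2 (1/2)⁽ⁿ⁺¹⁾`,
Euler's limit formula `Γ(1/2) = lim n^(1/2) n! / (1/2)⁽ⁿ⁺¹⁾` gives the leading term, and the
other two terms are smaller by factors of order `1/n` and `1/√n`.
-/

/-- The exponential generating function `𝔈̃₁(t) = 𝔘(t)³/(2(1−𝔘(t))³) + 𝔘(t)²/(1−𝔘(t))²` with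
`𝔘(t) = 1 − √(1−2t)`, i.e. `f(t) = (1−√(1−2t))³/(2·(1−2t)^{3/2}) + (1−√(1−2t))²/(1−2t)`. -/
noncomputable def f14 : ℝ → ℝ := fun t =>
  (1 - Real.sqrt (1 - 2 * t)) ^ 3 / (2 * (1 - 2 * t) ^ ((3 : ℝ) / 2))
    + (1 - Real.sqrt (1 - 2 * t)) ^ 2 / (1 - 2 * t)

open Real Filter Asymptotics Topology Polynomial Nat

section CompAffine

variable {𝕜 F : Type*} [NontriviallyNormedField 𝕜] [NormedAddCommGroup F] [NormedSpace 𝕜 F]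

theorem iteratedDeriv_comp_mul_left (n : ℕ) (c : 𝕜) (f : 𝕜 → F) :
    iteratedDeriv n (fun x => f (c * x)) = fun x => c ^ n • iteratedDeriv n f (c * x) := by
  induction n with
  | zero => simp
  | succ n ih =>
    ext x
    rw [iteratedDeriv_succ, ih, deriv_fun_const_smul_field,
      deriv_comp_mul_left (f := iteratedDeriv n f), iteratedDeriv_succ, smul_smul, pow_succ]

theorem iteratedDeriv_comp_const_sub_mul (n : ℕ) (a c : 𝕜) (f : 𝕜 → F) :
    iteratedDeriv n (fun x => f (a - c * x)) =
      fun x => (-c) ^ n • iteratedDeriv n f (a - c * x) := by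
  ext x
  simp only [iteratedDeriv_comp_mul_left n c (fun y => f (a - y)), iteratedDeriv_comp_const_sub,
    smul_smul, ← neg_pow']

end CompAffine

theorem iteratedDeriv_rpow_const (p x : ℝ) (n : ℕ) :
    iteratedDeriv n (fun x : ℝ => x ^ p) x = (descPochhammer ℝ n).eval p * x ^ (p - n) := by
  rw [iteratedDeriv_eq_iterate, iter_deriv_rpow_const]

theorem ascPochhammer_eval_eq_prod_range {R : Type*} [CommSemiring R] (n : ℕ) (r : R) :
    (ascPochhammer R n).eval r = ∏ j ∈ Finset.range n, (r + j) := by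
  induction n with
  | zero => simp
  | succ n ih => rw [ascPochhammer_succ_eval, ih, Finset.prod_range_succ]

theorem ascPochhammer_succ_eval_left {S : Type*} [CommSemiring S] (n : ℕ) (k : S) :
    (ascPochhammer S (n + 1)).eval k = k * (ascPochhammer S n).eval (k + 1) := by
  simp [ascPochhammer_succ_left]

theorem descPochhammer_eval_neg {R : Type*} [CommRing R] (n : ℕ) (r : R) :
    (descPochhammer R n).eval (-r) = (-1) ^ n * (ascPochhammer R n).eval r := by
  rw [← neg_neg r, ascPochhammer_eval_neg_eq_descPochhammer, ← mul_assoc, ← pow_add,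
    Even.neg_one_pow ⟨n, rfl⟩, one_mul, neg_neg]

theorem isEquivalent_ascPochhammer_eval_succ {s : ℝ} (hs : Gamma s ≠ 0) :
    (fun n : ℕ => (ascPochhammer ℝ (n + 1)).eval s) ~[atTop]
      fun n => n ^ s * n ! / Gamma s := by
  refine IsEquivalent.symm (isEquivalent_of_tendsto_one ?_)
  have h := (GammaSeq_tendsto_Gamma s).div_const (Gamma s)
  rw [div_self hs] at h
  refine h.congr fun n => ?_
  simp only [GammaSeq, Pi.div_apply, ascPochhammer_eval_eq_prod_range]
  exact div_right_comm _ _ _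

noncomputable def oneGallEGF (x : ℝ) : ℝ :=
  (x ^ (-3 / 2 : ℝ) - x ^ (-1 : ℝ) - x ^ (-1 / 2 : ℝ) + 1) / 2

theorem f14_eq_oneGallEGF {t : ℝ} (ht : t < 1 / 2) : f14 t = oneGallEGF (1 - 2 * t) := by
  have hx : 0 ≤ 1 - 2 * t := by linarith
  have hpow (r : ℝ) : (1 - 2 * t) ^ (r / 2) = √(1 - 2 * t) ^ r := rpow_div_two_eq_sqrt r hx
  have hsq : 1 - 2 * t = √(1 - 2 * t) ^ 2 := (sq_sqrt hx).symm
  have hs : 0 < √(1 - 2 * t) := sqrt_pos.mpr (by linarith)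
  simp only [f14, oneGallEGF]
  rw [rpow_neg_one, hpow, hpow, hpow]
  generalize √(1 - 2 * t) = s at hsq hs ⊢
  rw [hsq]
  simp only [rpow_neg hs.le, rpow_ofNat, rpow_one]
  field_simp
  ring

theorem iteratedDeriv_oneGallEGF_one {n : ℕ} (hn : n ≠ 0) :
    iteratedDeriv n oneGallEGF 1 = ((descPochhammer ℝ n).eval (-3 / 2)
      - (descPochhammer ℝ n).eval (-1) - (descPochhammer ℝ n).eval (-1 / 2)) / 2 := by
  have hC (p : ℝ) : ContDiffAt ℝ n (fun x : ℝ => x ^ p) 1 :=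
    contDiffAt_rpow_const (Or.inl one_ne_zero)
  unfold oneGallEGF
  rw [iteratedDeriv_div_const,
    iteratedDeriv_fun_add (((hC _).sub (hC _)).sub (hC _)) contDiffAt_const,
    iteratedDeriv_fun_sub ((hC _).sub (hC _)) (hC _), iteratedDeriv_fun_sub (hC _) (hC _)]
  simp [iteratedDeriv_rpow_const, iteratedDeriv_const, hn]

theorem iteratedDeriv_f14_zero {n : ℕ} (hn : n ≠ 0) :
    iteratedDeriv n f14 0 = 2 ^ n * ((ascPochhammer ℝ (n + 1)).eval (1 / 2)
      - ((ascPochhammer ℝ n).eval (1 / 2) + n !) / 2) := by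
  have hloc : f14 =ᶠ[𝓝 0] fun t => oneGallEGF (1 - 2 * t) :=
    eventually_lt_nhds (by norm_num : (0 : ℝ) < 1 / 2) |>.mono fun t ht => f14_eq_oneGallEGF ht
  simp only [hloc.iteratedDeriv_eq, iteratedDeriv_comp_const_sub_mul, mul_zero, sub_zero,
    smul_eq_mul]
  rw [iteratedDeriv_oneGallEGF_one hn, ascPochhammer_succ_eval_left,
    show (-3 / 2 : ℝ) = -(1 / 2 + 1) by norm_num, show (-1 / 2 : ℝ) = -(1 / 2) by norm_num,
    descPochhammer_eval_neg, descPochhammer_eval_neg, descPochhammer_eval_neg,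
    ascPochhammer_eval_one]
  have h : (-2 : ℝ) ^ n * (-1) ^ n = 2 ^ n := by rw [← mul_pow]; norm_num
  linear_combination ((ascPochhammer ℝ n).eval (1 / 2 + 1) - (n ! : ℝ)
    - (ascPochhammer ℝ n).eval (1 / 2)) / 2 * h

theorem isLittleO_ascPochhammer_eval_succ (s : ℝ) :
    (fun n : ℕ => (ascPochhammer ℝ n).eval s) =o[atTop]
      fun n => (ascPochhammer ℝ (n + 1)).eval s := by
  have h : (fun _ : ℕ => (1 : ℝ)) =o[atTop] fun n : ℕ => s + n :=
    (isLittleO_one_left_iff ℝ).2 <| tendsto_norm_atTop_atTop.comp <|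
      tendsto_atTop_add_const_left _ s tendsto_natCast_atTop_atTop
  exact ((isBigO_refl _ _).mul_isLittleO h).congr (fun _ => mul_one _)
    fun n => (ascPochhammer_succ_eval n s).symm

/-- The sequence `n ↦ f14⁽ⁿ⁾(0)` (the number of leaf-labeled general galled trees with `n`
leaves and one gall) is asymptotically equivalent to `n ↦ (1/√π)·n^{1/2}·2ⁿ·n!` as `n → ∞`. -/
theorem stmt14 :
    Asymptotics.IsEquivalent Filter.atTop
      (fun n : ℕ => iteratedDeriv n f14 0)
      (fun n : ℕ => (1 / Real.sqrt Real.pi) * (n : ℝ) ^ ((1 : ℝ) / 2)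
        * 2 ^ n * (Nat.factorial n : ℝ)) := by
  set v : ℕ → ℝ := fun n => n ^ (1 / 2 : ℝ) * n ! / √π
  have hmain : (fun n : ℕ => (ascPochhammer ℝ (n + 1)).eval (1 / 2)) ~[atTop] v := by
    have h :=
      isEquivalent_ascPochhammer_eval_succ (s := 1 / 2) (Gamma_pos_of_pos one_half_pos).ne'
    rwa [Gamma_one_half_eq] at h
  have hfact : (fun n : ℕ => (n ! : ℝ)) =o[atTop] v := by
    have h : (fun _ : ℕ => (1 : ℝ)) =o[atTop] fun n : ℕ => n ^ (1 / 2 : ℝ) / √π :=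
      (isLittleO_one_left_iff ℝ).2 <| tendsto_norm_atTop_atTop.comp <|
        ((tendsto_rpow_atTop (by norm_num)).comp tendsto_natCast_atTop_atTop).atTop_div_const
          (sqrt_pos.2 pi_pos)
    exact ((isBigO_refl _ _).mul_isLittleO h).congr (fun _ => mul_one _)
      fun n => by simp only [v]; ring
  have herr : (fun n : ℕ => ((ascPochhammer ℝ n).eval (1 / 2) + n !) / 2) =o[atTop] v :=
    ((((isLittleO_ascPochhammer_eval_succ _).trans_isBigO hmain.isBigO).add hfact).const_mul_left
      (1 / 2)).congr_left fun _ => one_div_mul_eq_div _ _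
  refine ((IsEquivalent.refl (u := fun n : ℕ => (2 : ℝ) ^ n)).mul
    (hmain.sub_isLittleO herr)).congr_left ?_ |>.congr_right ?_
  · filter_upwards [eventually_ne_atTop 0] with n hn
    exact (iteratedDeriv_f14_zero hn).symm
  · exact Eventually.of_forall fun n => by simp only [v, Pi.mul_apply]; ring
end
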